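/- There exists a computable functional unit H for ℕ such that every computable method operation M on ℕ is a derived method operation of H. -/

import Mathlib

/-- Primitive instructions: plain basic `f.m`, positive test `+f.m`, negative test `-f.m`
(method names are natural numbers, there is a single focus `f`), forward jump `#l`,
backward jump `\l`, and the positive/negative termination instructions `!t` / `!f`. -/
inductive Instr : Type where
  | basic (m : ℕ)
  | postest (m : ℕ)
  | negtest (m : ℕ)
  | fjump (l : ℕ)
  | bjump (l : ℕ)
  | haltT
  | haltF
deriving DecidableEq

/-- A functional unit for a state space `S`: a finite, functional set of
(method name, method operation) pairs, where a method operation is a total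
function `S → Bool × S`. -/
structure FU (S : Type*) where
  carrier : Set (ℕ × (S → Bool × S))
  finite : carrier.Finite
  functional : ∀ {m : ℕ} {M M' : S → Bool × S},
    (m, M) ∈ carrier → (m, M') ∈ carrier → M = M'

/-- The interface of a functional unit: the set of method names occurring in it. -/
def FU.iface {S : Type*} (H : FU S) : Set ℕ := {m | ∃ M, (m, M) ∈ H.carrier}

/-- The method operation named `m` in `H` (an arbitrary fixed value if `m ∉ I(H)`). -/
noncomputable def FU.op {S : Type*} (H : FU S) (m : ℕ) (s : S) : Bool × S :=
  letI := Classical.propDecidable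
  if h : ∃ M, (m, M) ∈ H.carrier then h.choose s else (true, s)

/-- The restriction `⟨I, H⟩` of a functional unit to a set `I` of method names. -/
def FU.restrict {S : Type*} (H : FU S) (I : Set ℕ) : FU S where
  carrier := {p ∈ H.carrier | p.1 ∈ I}
  finite := H.finite.subset (Set.sep_subset _ _)
  functional := fun hM hM' => H.functional hM.1 hM'.1

/-- The method names used by an instruction all belong to `I`. -/
def Instr.namesIn (I : Set ℕ) : Instr → Prop
  | .basic m => m ∈ I
  | .postest m => m ∈ I
  | .negtest m => m ∈ I
  | _ => True

/-- An instruction sequence over a set `I` of method names: a finite nonempty list of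
primitive instructions whose method names belong to `I`. -/
def InstrSeqOver (I : Set ℕ) (x : List Instr) : Prop :=
  x ≠ [] ∧ ∀ u ∈ x, u.namesIn I

/-- `Exec H x i s b s'` : execution of the instruction sequence `x` on the functional
unit `H`, from (0-based) position `i` in state `s`, terminates delivering the Boolean
value `b` with final state `s'`.  (Position `i` here corresponds to the 1-based
position `i+1`; positions outside the sequence, jumps `#0`/`\0`, and infinite
executions admit no derivation, i.e. execution does not terminate.) -/
inductive Exec {S : Type*} (H : FU S) (x : List Instr) : ℕ → S → Bool → S → Prop where
  | basic {i : ℕ} {s : S} {b : Bool} {s' : S} (m : ℕ)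
      (hu : x[i]? = some (Instr.basic m))
      (h : Exec H x (i + 1) (H.op m s).2 b s') : Exec H x i s b s'
  | posT {i : ℕ} {s : S} {b : Bool} {s' : S} (m : ℕ)
      (hu : x[i]? = some (Instr.postest m)) (hr : (H.op m s).1 = true)
      (h : Exec H x (i + 1) (H.op m s).2 b s') : Exec H x i s b s'
  | posF {i : ℕ} {s : S} {b : Bool} {s' : S} (m : ℕ)
      (hu : x[i]? = some (Instr.postest m)) (hr : (H.op m s).1 = false)
      (h : Exec H x (i + 2) (H.op m s).2 b s') : Exec H x i s b s'
  | negT {i : ℕ} {s : S} {b : Bool} {s' : S} (m : ℕ)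
      (hu : x[i]? = some (Instr.negtest m)) (hr : (H.op m s).1 = true)
      (h : Exec H x (i + 2) (H.op m s).2 b s') : Exec H x i s b s'
  | negF {i : ℕ} {s : S} {b : Bool} {s' : S} (m : ℕ)
      (hu : x[i]? = some (Instr.negtest m)) (hr : (H.op m s).1 = false)
      (h : Exec H x (i + 1) (H.op m s).2 b s') : Exec H x i s b s'
  | fjump {i : ℕ} {s : S} {b : Bool} {s' : S} (l : ℕ)
      (hu : x[i]? = some (Instr.fjump l))
      (h : Exec H x (i + l) s b s') : Exec H x i s b s'
  | bjump {i : ℕ} {s : S} {b : Bool} {s' : S} (l : ℕ)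
      (hu : x[i]? = some (Instr.bjump l)) (hl : l ≤ i)
      (h : Exec H x (i - l) s b s') : Exec H x i s b s'
  | haltT {i : ℕ} {s : S} (hu : x[i]? = some Instr.haltT) : Exec H x i s true s
  | haltF {i : ℕ} {s : S} (hu : x[i]? = some Instr.haltF) : Exec H x i s false s

/-- `M` is a derived method operation of `H`: there is an instruction sequence `x`
over `I(H)` whose produced partial method operation `⌈x⌉_H` is total and equals `M`. -/
def DerivedOp {S : Type*} (H : FU S) (M : S → Bool × S) : Prop :=
  ∃ x : List Instr, InstrSeqOver H.iface x ∧ ∀ s, Exec H x 0 s (M s).1 (M s).2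

/-- `H ≤ H'` : every method operation of `H` is a derived method operation of `H'`. -/
def FU.le {S : Type*} (H H' : FU S) : Prop :=
  ∀ m M, (m, M) ∈ H.carrier → DerivedOp H' M

/-- `H ≡ H'` : `H ≤ H'` and `H' ≤ H`. -/
def FU.equiv {S : Type*} (H H' : FU S) : Prop := FU.le H H' ∧ FU.le H' H

/-- A method operation on ℕ is computable if both its components are. -/
def ComputableMO (M : ℕ → Bool × ℕ) : Prop :=
  Computable (fun n => (M n).1) ∧ Computable (fun n => (M n).2)

/-- A functional unit for ℕ is computable if all its method operations are. -/
def ComputableFU (H : FU ℕ) : Prop :=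
  ∀ m M, (m, M) ∈ H.carrier → ComputableMO M

/-! A single functional unit can run every code: its state packs the input `n`, a code number
`e` and a step bound `k`. The instruction sequence for `M` writes `e`, the code of
`n ↦ encode (M n)`, into the state by `e` increments, then repeatedly evaluates code `e` on `n`
for `k` steps, incrementing `k` until the evaluation halts, and finally decodes the result.
Each method is primitive recursive because it evaluates a code only for boundedly many steps;
the unbounded search lives in the loop of the instruction sequence, and it terminates because
`M` is total. -/

open Nat.Partrec (Code)
open Nat.Partrec.Code Encodable

namespace FU

variable {S : Type*} {k : ℕ}

def ofFn (M : Fin k → S → Bool × S) : FU S where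
  carrier := Set.range fun i : Fin k => ((i : ℕ), M i)
  finite := Set.finite_range _
  functional := by
    rintro m _ _ ⟨i, hi⟩ ⟨j, hj⟩
    simp only [Prod.mk.injEq] at hi hj
    obtain rfl : i = j := Fin.ext (hi.1.trans hj.1.symm)
    exact hi.2.symm.trans hj.2

theorem ofFn_op (M : Fin k → S → Bool × S) (i : Fin k) : (ofFn M).op i = M i := by
  have hex : ∃ M', ((i : ℕ), M') ∈ (ofFn M).carrier := ⟨M i, i, rfl⟩
  funext s
  rw [op, dif_pos hex, (ofFn M).functional hex.choose_spec ⟨i, rfl⟩]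

theorem iface_ofFn (M : Fin k → S → Bool × S) : (ofFn M).iface = Set.Iio k := by
  ext m
  constructor
  · rintro ⟨_, i, hi⟩
    simp only [Prod.mk.injEq] at hi
    exact hi.1 ▸ i.isLt
  · intro hm
    exact ⟨M ⟨m, hm⟩, ⟨m, hm⟩, rfl⟩

theorem computableFU_ofFn {M : Fin k → ℕ → Bool × ℕ} (hM : ∀ i, ComputableMO (M i)) :
    ComputableFU (ofFn M) := by
  rintro m _ ⟨i, hi⟩
  simp only [Prod.mk.injEq] at hi
  exact hi.2 ▸ hM i

end FU

theorem ComputableMO.of_primrec {M : ℕ → Bool × ℕ} (hM : Primrec M) : ComputableMO M :=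
  ⟨(Primrec.fst.comp hM).to_comp, (Primrec.snd.comp hM).to_comp⟩

theorem ComputableMO.computable {M : ℕ → Bool × ℕ} (hM : ComputableMO M) : Computable M :=
  hM.1.pair hM.2

namespace Exec

variable {S : Type*} {H : FU S} {x : List Instr} {b : Bool} {s' : S}

theorem of_basic_run {i m n : ℕ} {t : ℕ → S}
    (hx : ∀ j < n, x[i + j]? = some (.basic m)) (ht : ∀ j < n, (H.op m (t j)).2 = t (j + 1))
    (h : Exec H x (i + n) (t n) b s') : Exec H x i (t 0) b s' := by
  induction n generalizing i t with
  | zero => exact h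
  | succ n ih =>
    refine .basic m (hx 0 n.succ_pos) ?_
    rw [ht 0 n.succ_pos]
    refine ih (i := i + 1) (t := fun j => t (j + 1)) (fun j hj => ?_) (fun _ hj => ht _ (by omega))
      (by rwa [Nat.add_right_comm, Nat.add_assoc])
    rw [Nat.add_assoc, Nat.add_comm 1]
    exact hx _ (by omega)

/-- The loop `+f.m; #2; \2` applies `m` until its reply is `true`, then continues after it. -/
theorem of_search_loop {i m n : ℕ} {t : ℕ → S} (hi : x[i]? = some (.postest m))
    (hj : x[i + 1]? = some (.fjump 2)) (hb : x[i + 2]? = some (.bjump 2))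
    (hfalse : ∀ j < n, H.op m (t j) = (false, t (j + 1))) (htrue : (H.op m (t n)).1 = true)
    (h : Exec H x (i + 3) (H.op m (t n)).2 b s') : Exec H x i (t 0) b s' := by
  induction n generalizing t with
  | zero => exact .posT m hi htrue (.fjump 2 hj h)
  | succ n ih =>
    have hstep := hfalse 0 n.succ_pos
    refine .posF m hi (by rw [hstep]) ?_
    rw [hstep]
    exact .bjump 2 hb (by omega)
      (ih (t := fun j => t (j + 1)) (fun _ hj => hfalse _ (by omega)) htrue h)

theorem of_test_halt {i m : ℕ} {s : S} (hi : x[i]? = some (.postest m))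
    (ht : x[i + 1]? = some .haltT) (hf : x[i + 2]? = some .haltF) :
    Exec H x i s (H.op m s).1 (H.op m s).2 := by
  cases hr : (H.op m s).1
  · exact .posF m hi hr (.haltF hf)
  · exact .posT m hi hr (.haltT ht)

end Exec

namespace Universal

def state (n e k : ℕ) : ℕ := Nat.pair (Nat.pair n e) k

def initOp (n : ℕ) : Bool × ℕ := (true, state n 0 0)

def incrOp (p : ℕ) : Bool × ℕ :=
  (true, state p.unpair.1.unpair.1 (p.unpair.1.unpair.2 + 1) p.unpair.2)

def stepOp (p : ℕ) : Bool × ℕ :=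
  match evaln p.unpair.2 (Denumerable.ofNat Code p.unpair.1.unpair.2) p.unpair.1.unpair.1 with
  | some v => (true, v)
  | none => (false, Nat.pair p.unpair.1 (p.unpair.2 + 1))

def outOp (v : ℕ) : Bool × ℕ := (decide (v.unpair.1 = 1), v.unpair.2)

theorem primrec_state : Primrec fun p : ℕ × ℕ × ℕ => state p.1 p.2.1 p.2.2 :=
  Primrec₂.natPair.comp (Primrec₂.natPair.comp Primrec.fst (Primrec.fst.comp Primrec.snd))
    (Primrec.snd.comp Primrec.snd)

theorem primrec_initOp : Primrec initOp :=
  (Primrec.const true).pair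
    (primrec_state.comp (Primrec.id.pair ((Primrec.const 0).pair (Primrec.const 0))))

theorem primrec_unpair_fst_unpair : Primrec fun p : ℕ => p.unpair.1.unpair :=
  Primrec.unpair.comp (Primrec.fst.comp Primrec.unpair)

theorem primrec_incrOp : Primrec incrOp :=
  (Primrec.const true).pair (primrec_state.comp
    ((Primrec.fst.comp primrec_unpair_fst_unpair).pair
      ((Primrec.succ.comp (Primrec.snd.comp primrec_unpair_fst_unpair)).pair
        (Primrec.snd.comp Primrec.unpair))))

theorem primrec_stepOp : Primrec stepOp := by
  have hev : Primrec fun p : ℕ =>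
      evaln p.unpair.2 (Denumerable.ofNat Code p.unpair.1.unpair.2) p.unpair.1.unpair.1 :=
    primrec_evaln.comp (((Primrec.snd.comp Primrec.unpair).pair
      ((Primrec.ofNat Code).comp (Primrec.snd.comp primrec_unpair_fst_unpair))).pair
      (Primrec.fst.comp primrec_unpair_fst_unpair))
  refine (Primrec.option_casesOn hev ((Primrec.const false).pair (Primrec₂.natPair.comp
    (Primrec.fst.comp Primrec.unpair) (Primrec.succ.comp (Primrec.snd.comp Primrec.unpair))))
    ((Primrec.const true).pair Primrec.snd).to₂).of_eq fun p => ?_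
  unfold stepOp
  split <;> simp_all

theorem primrec_outOp : Primrec outOp :=
  (Primrec.eq.comp (Primrec.fst.comp Primrec.unpair) (Primrec.const 1)).decide.pair
    (Primrec.snd.comp Primrec.unpair)

theorem incrOp_state (n e k : ℕ) : incrOp (state n e k) = (true, state n (e + 1) k) := by
  simp [incrOp, state]

theorem stepOp_state_of_none {c : Code} {n k : ℕ} (h : evaln k c n = none) :
    stepOp (state n (encode c) k) = (false, state n (encode c) (k + 1)) := by
  simp [stepOp, state, h]

theorem stepOp_state_of_some {c : Code} {n k v : ℕ} (h : evaln k c n = some v) :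
    stepOp (state n (encode c) k) = (true, v) := by
  simp [stepOp, state, h]

theorem outOp_encode (p : Bool × ℕ) : outOp (encode p) = p := by
  obtain ⟨_ | _, m⟩ := p <;> simp [outOp, encode_prod_val]

def fu : FU ℕ := FU.ofFn ![initOp, incrOp, stepOp, outOp]

theorem fu_op_zero : fu.op 0 = initOp := FU.ofFn_op _ 0
theorem fu_op_one : fu.op 1 = incrOp := FU.ofFn_op _ 1
theorem fu_op_two : fu.op 2 = stepOp := FU.ofFn_op _ 2
theorem fu_op_three : fu.op 3 = outOp := FU.ofFn_op _ 3

theorem computableFU_fu : ComputableFU fu := by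
  refine FU.computableFU_ofFn fun i => ComputableMO.of_primrec ?_
  fin_cases i
  exacts [primrec_initOp, primrec_incrOp, primrec_stepOp, primrec_outOp]

/-- `f.0; (f.1)^e; +f.2; #2; \2; +f.3; !t; !f`, the program for the function with code `e`. -/
def program (e : ℕ) : List Instr :=
  (.basic 0 :: .replicate e (.basic 1)) ++
    [.postest 2, .fjump 2, .bjump 2, .postest 3, .haltT, .haltF]

theorem program_over (e : ℕ) : InstrSeqOver fu.iface (program e) := by
  refine ⟨by simp [program], fun u hu => ?_⟩
  simp only [program, List.cons_append, List.mem_cons, List.mem_append, List.mem_replicate,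
    List.not_mem_nil, or_false] at hu
  rw [fu, FU.iface_ofFn]
  rcases hu with rfl | ⟨-, rfl⟩ | rfl | rfl | rfl | rfl | rfl | rfl <;>
    simp [Instr.namesIn]

theorem program_getElem?_succ {e j : ℕ} (hj : j < e) : (program e)[1 + j]? = some (.basic 1) := by
  rw [program, List.getElem?_append_left (by simp; omega), Nat.add_comm,
    List.getElem?_cons_succ]
  simp [hj]

theorem program_getElem?_loop (e j : ℕ) :
    (program e)[e + 1 + j]? =
      [Instr.postest 2, .fjump 2, .bjump 2, .postest 3, .haltT, .haltF][j]? := by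
  rw [program, List.getElem?_append_right (by simp)]
  simp

theorem exec_program {c : Code} {n v : ℕ} (hv : v ∈ c.eval n) :
    Exec fu (program (encode c)) 0 n (outOp v).1 (outOp v).2 := by
  set e := encode c
  have hhalts : ∃ k, (evaln k c n).isSome := by
    obtain ⟨k, hk⟩ := evaln_complete.1 hv
    exact ⟨k, Option.isSome_iff_exists.2 ⟨v, hk⟩⟩
  obtain ⟨v₀, hv₀⟩ := Option.isSome_iff_exists.1 (Nat.find_spec hhalts)
  obtain rfl : v₀ = v := Part.mem_unique (evaln_sound hv₀) hv
  have hloop : Exec fu (program e) (e + 1) (state n e 0) (outOp v₀).1 (outOp v₀).2 := by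
    refine Exec.of_search_loop (t := state n e) (n := Nat.find hhalts) (program_getElem?_loop e 0)
      (program_getElem?_loop e 1) (program_getElem?_loop e 2) (fun j hj => ?_)
      (by rw [fu_op_two, stepOp_state_of_some hv₀]) ?_
    · have hnone := Option.not_isSome_iff_eq_none.1 (Nat.find_min hhalts hj)
      rw [fu_op_two, stepOp_state_of_none hnone]
    · rw [fu_op_two, stepOp_state_of_some hv₀, ← fu_op_three]
      exact Exec.of_test_halt (program_getElem?_loop e 3) (program_getElem?_loop e 4)
        (program_getElem?_loop e 5)
  refine .basic 0 (by simp [program]) ?_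
  rw [fu_op_zero]
  refine Exec.of_basic_run (t := fun j => state n j 0) (n := e)
    (fun _ hj => program_getElem?_succ hj) (fun _ _ => by rw [fu_op_one, incrOp_state]) ?_
  rwa [Nat.add_comm]

theorem derivedOp_of_computableMO {M : ℕ → Bool × ℕ} (hM : ComputableMO M) :
    DerivedOp fu M := by
  obtain ⟨c, hc⟩ :=
    Code.exists_code.1 (Partrec.nat_iff.1 (Computable.encode.comp hM.computable).partrec)
  refine ⟨program (encode c), program_over _, fun n => ?_⟩
  have hv : encode (M n) ∈ c.eval n := by rw [hc]; exact Part.mem_some _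
  simpa only [outOp_encode] using exec_program hv

end Universal

/-- There exists a computable functional unit for ℕ of which every computable method
operation on ℕ is a derived method operation. -/
theorem exists_fu_all_computable_derived :
    ∃ H : FU ℕ, ComputableFU H ∧
      ∀ M : ℕ → Bool × ℕ, ComputableMO M → DerivedOp H M :=
  ⟨Universal.fu, Universal.computableFU_fu, fun _ => Universal.derivedOp_of_computableMO⟩
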